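/- (Lower bound for ℓ_p/ℓ_q settings) Fix p ∈ [1,∞] and let q = p* = 1/(1 - 1/p) be the dual exponent. Let K = B_p^d be the closed unit ball of the ℓ_p norm in ℝ^d, let W ⊆ {-1,1}^d satisfy |W| ≥ 2^{d/6} and ⟨u,v⟩ ≤ d/2 for all distinct u, v ∈ W, and for V ⊆ W define g_{p,V}(x) = max{1/2, max_{w ∈ V} ⟨w, x⟩ / d^{1/q}}. Then each g_{p,V} is convex and 1-Lipschitz on K with respect to the ℓ_p norm, and for every n ≤ d/6, with probability greater than 1/2 over a sample S = (V₁,...,Vₙ) of n i.i.d. uniform subsets of W, there exists x̂ ∈ K with F_S(x̂) = min_{x ∈ K} F_S(x) and F_D(x̂) - min_{x ∈ K} F_D(x) ≥ 1/4, where F_S(x) = (1/n) Σᵢ g_{p,Vᵢ}(x) and F_D(x) = E_V[g_{p,V}(x)] for V a uniform random subset of W. -/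

import Mathlib

open scoped BigOperators ENNReal
attribute [local instance] Classical.propDecidable

/-- `g_{p,V}(x) = max{1/2, max_{w ∈ V} ⟨w, x⟩ / d^(1/q)}` on `ℝ^d` with the `ℓ_p` norm,
the inner maximum being `1/2` for `V = ∅`. -/
noncomputable def gpV {d : ℕ} (q : ℝ≥0∞) (V : Finset (PiLp p fun _ : Fin d => ℝ))
    (x : PiLp p fun _ : Fin d => ℝ) : ℝ :=
  V.fold max (1/2) (fun w => (∑ i : Fin d, w i * x i) / (d : ℝ) ^ (1/q).toReal)

section aux

variable {d : ℕ} {p q : ℝ≥0∞}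

lemma dual_facts [Fact (1 ≤ p)] (hpq : 1/p + 1/q = 1) :
    (1/p).toReal + (1/q).toReal = 1 ∧ (1/p).toReal = p.toReal⁻¹ ∧ (1/q).toReal = q.toReal⁻¹ := by
  have hp1 : (1:ℝ≥0∞) ≤ p := Fact.out
  have h1 : 1/p ≤ 1 := by
    rw [one_div]; exact ENNReal.inv_le_one.2 hp1
  have h2 : 1/q ≤ 1 := by
    calc 1/q ≤ 1/p + 1/q := le_add_self
    _ = 1 := hpq
  have hfin1 : 1/p ≠ ⊤ := ne_top_of_le_ne_top ENNReal.one_ne_top h1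
  have hfin2 : 1/q ≠ ⊤ := ne_top_of_le_ne_top ENNReal.one_ne_top h2
  refine ⟨?_, ?_, ?_⟩
  · rw [← ENNReal.toReal_add hfin1 hfin2, hpq, ENNReal.toReal_one]
  · rw [one_div, ENNReal.toReal_inv]
  · rw [one_div, ENNReal.toReal_inv]

/-- Hölder-type bound: for `z` in `ℓ_p`, `∑ |z i| ≤ d^(1/q) * ‖z‖`. -/
lemma sum_abs_le_rpow_mul_norm [Fact (1 ≤ p)] (hd : 0 < d) (hpq : 1/p + 1/q = 1)
    (z : PiLp p fun _ : Fin d => ℝ) :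
    ∑ i : Fin d, |z i| ≤ (d : ℝ) ^ (1/q).toReal * ‖z‖ := by
  obtain ⟨htab, hta, htb⟩ := dual_facts hpq
  have hp1 : (1:ℝ≥0∞) ≤ p := Fact.out
  rcases eq_or_lt_of_le hp1 with hp | hp
  · -- p = 1
    have hq : 1/q = 0 := by
      have h : (1:ℝ≥0∞) + 1/q = 1 + 0 := by
        rw [add_zero]
        rw [← hp] at hpq
        simpa using hpq
      exact (ENNReal.add_right_inj ENNReal.one_ne_top).1 h
    have hzn : ‖z‖ = ∑ i : Fin d, |z i| := by
      rw [PiLp.norm_eq_sum (by rw [← hp]; norm_num : 0 < p.toReal)]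
      rw [show p.toReal = 1 by rw [← hp]; simp]
      simp [Real.norm_eq_abs]
    rw [hq, hzn]
    simp
  · rcases eq_or_ne p ⊤ with hpt | hpt
    · -- p = ∞
      have hq : 1/q = 1 := by
        have h0 : 1/p = 0 := by rw [hpt]; simp
        rwa [h0, zero_add] at hpq
      have hzi : ∀ i, |z i| ≤ ‖z‖ := by
        intro i
        subst hpt
        rw [PiLp.norm_eq_ciSup]
        have := le_ciSup (f := fun i => ‖z i‖) (Set.Finite.bddAbove (Set.finite_range _)) i
        simpa [Real.norm_eq_abs] using this
      calc ∑ i : Fin d, |z i| ≤ ∑ _i : Fin d, ‖z‖ := Finset.sum_le_sum fun i _ => hzi i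
      _ = (d:ℝ) * ‖z‖ := by simp [Finset.sum_const, Finset.card_univ]
      _ = (d:ℝ) ^ (1/q).toReal * ‖z‖ := by rw [hq]; norm_num
    · -- 1 < p < ∞
      have hprt : 1 < p.toReal := by
        have := (ENNReal.toReal_lt_toReal ENNReal.one_ne_top hpt).2 hp
        simpa using this
      have hta_pos : 0 < (1/p).toReal := by rw [hta]; positivity
      have hta_lt : (1/p).toReal < 1 := by
        rw [hta]
        exact inv_lt_one_of_one_lt₀ hprt
      have htb_pos : 0 < (1/q).toReal := by
        have := htab
        linarith
      have hqrt_pos : 0 < q.toReal := by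
        by_contra h
        push_neg at h
        rw [htb] at htb_pos
        have : q.toReal⁻¹ ≤ 0 := inv_nonpos.2 h
        linarith
      have hqr_eq : q.toReal = (1/q).toReal⁻¹ := by rw [htb, inv_inv]
      have hqrt : 1 < q.toReal := by
        rw [hqr_eq]
        have htb_lt : (1/q).toReal < 1 := by linarith
        exact ((one_lt_inv₀ htb_pos).2 htb_lt)
      have hconj : Real.HolderConjugate q.toReal p.toReal := by
        refine Real.holderConjugate_iff.mpr ⟨hqrt, ?_⟩
        rw [← hta, ← htb] at *
        linarith
      have key := Real.inner_le_Lp_mul_Lq (Finset.univ : Finset (Fin d))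
        (fun _ => (1:ℝ)) (fun i => |z i|) hconj
      have h1 : ∑ i : Fin d, (1:ℝ) * |z i| = ∑ i : Fin d, |z i| := by simp
      have h2 : (∑ i : Fin d, |(1:ℝ)| ^ q.toReal) = (d:ℝ) := by simp
      simp only [one_mul, abs_one, Real.one_rpow, abs_abs, Finset.sum_const,
        Finset.card_univ, Fintype.card_fin, nsmul_eq_mul, mul_one] at key
      have hzn : ‖z‖ = (∑ i : Fin d, |z i| ^ p.toReal) ^ (1/p.toReal) := by
        rw [PiLp.norm_eq_sum (by linarith : 0 < p.toReal)]
        simp [Real.norm_eq_abs]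
      rw [hzn, htb]
      rw [one_div, one_div] at key
      simpa [one_div] using key

/-- norm of the scaled sign vector is 1 -/
lemma norm_scaled_sign [Fact (1 ≤ p)] (hd : 0 < d)
    (w : PiLp p fun _ : Fin d => ℝ) (hw : ∀ i, w i = 1 ∨ w i = -1) :
    ‖((d:ℝ) ^ (-(1/p).toReal)) • w‖ = 1 := by
  have hp1 : (1:ℝ≥0∞) ≤ p := Fact.out
  have hdR : (0:ℝ) < d := Nat.cast_pos.2 hd
  have habs : ∀ i, |w i| = 1 := by
    intro i; rcases hw i with h | h <;> simp [h]
  rcases eq_or_ne p ⊤ with hpt | hpt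
  · subst hpt
    have h0 : ((1:ℝ≥0∞)/⊤).toReal = 0 := by simp
    rw [h0]
    simp only [neg_zero, Real.rpow_zero, one_smul]
    rw [PiLp.norm_eq_ciSup]
    have : ∀ i : Fin d, ‖w i‖ = 1 := fun i => by rw [Real.norm_eq_abs, habs i]
    simp only [this]
    exact ciSup_const (ι := Fin d) (a := (1:ℝ)) (hι := ⟨⟨0, hd⟩⟩)
  · have hp0 : p ≠ 0 := (zero_lt_one.trans_le hp1).ne'
    have hprt : 0 < p.toReal := ENNReal.toReal_pos hp0 hpt
    have hta : (1/p).toReal = p.toReal⁻¹ := by rw [one_div, ENNReal.toReal_inv]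
    set c : ℝ := (d:ℝ) ^ (-(1/p).toReal) with hc
    have hcpos : 0 < c := Real.rpow_pos_of_pos hdR _
    rw [PiLp.norm_eq_sum hprt]
    have hterm : ∀ i : Fin d, ‖(c • w) i‖ ^ p.toReal = c ^ p.toReal := by
      intro i
      rw [PiLp.smul_apply, smul_eq_mul, Real.norm_eq_abs, abs_mul, habs i, mul_one,
        abs_of_pos hcpos]
    simp only [hterm, Finset.sum_const, Finset.card_univ, Fintype.card_fin, nsmul_eq_mul]
    rw [Real.mul_rpow (le_of_lt hdR) (by positivity), ← Real.rpow_mul (le_of_lt hcpos),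
      mul_one_div_cancel (ne_of_gt hprt), Real.rpow_one, hc, hta,
      ← Real.rpow_add hdR]
    simp

lemma half_le_gpV (V : Finset (PiLp p fun _ : Fin d => ℝ)) (x : PiLp p fun _ : Fin d => ℝ) :
    1/2 ≤ gpV q V x := (Finset.le_fold_max _).2 (Or.inl le_rfl)

lemma gpV_le (V : Finset (PiLp p fun _ : Fin d => ℝ)) (x : PiLp p fun _ : Fin d => ℝ) {M : ℝ}
    (h1 : 1/2 ≤ M)
    (h2 : ∀ w ∈ V, (∑ i : Fin d, w i * x i) / (d : ℝ) ^ (1/q).toReal ≤ M) :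
    gpV q V x ≤ M := (Finset.fold_max_le M).2 ⟨h1, h2⟩

lemma le_gpV_of_mem {V : Finset (PiLp p fun _ : Fin d => ℝ)} {w : PiLp p fun _ : Fin d => ℝ}
    (hw : w ∈ V) (x : PiLp p fun _ : Fin d => ℝ) :
    (∑ i : Fin d, w i * x i) / (d : ℝ) ^ (1/q).toReal ≤ gpV q V x :=
  (Finset.le_fold_max _).2 (Or.inr ⟨w, hw, le_rfl⟩)

lemma gpV_convexOn [Fact (1 ≤ p)] {K : Set (PiLp p fun _ : Fin d => ℝ)} (hK : Convex ℝ K)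
    (V : Finset (PiLp p fun _ : Fin d => ℝ)) : ConvexOn ℝ K (gpV q V) := by
  classical
  induction V using Finset.induction_on with
  | empty =>
    have he : gpV q (∅ : Finset (PiLp p fun _ : Fin d => ℝ)) = fun _ => (1/2 : ℝ) :=
      funext fun x => by simp [gpV]
    rw [he]
    exact convexOn_const _ hK
  | @insert a s ha ih =>
    have hlin : ConvexOn ℝ K (fun x : PiLp p fun _ : Fin d => ℝ =>
        (∑ i : Fin d, a i * x i) / (d : ℝ) ^ (1/q).toReal) := by
      refine ⟨hK, ?_⟩
      intro x _ y _ s' t _ _ _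
      have hsum : (∑ i : Fin d, a i * (s' • x + t • y) i)
          = s' * (∑ i : Fin d, a i * x i) + t * (∑ i : Fin d, a i * y i) := by
        rw [Finset.mul_sum, Finset.mul_sum, ← Finset.sum_add_distrib]
        refine Finset.sum_congr rfl fun i _ => ?_
        rw [PiLp.add_apply, PiLp.smul_apply, PiLp.smul_apply, smul_eq_mul, smul_eq_mul]
        ring
      simp only [smul_eq_mul, hsum]
      exact le_of_eq (by ring)
    have he : gpV q (insert a s) = (fun x : PiLp p fun _ : Fin d => ℝ =>
        (∑ i : Fin d, a i * x i) / (d : ℝ) ^ (1/q).toReal) ⊔ gpV q s := by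
      funext x
      simp only [gpV, Finset.fold_insert ha, Pi.sup_apply]
    rw [he]
    exact hlin.sup ih

lemma gpV_lipschitz [Fact (1 ≤ p)] (hd : 0 < d) (hpq : 1/p + 1/q = 1)
    (V : Finset (PiLp p fun _ : Fin d => ℝ))
    (hV : ∀ w ∈ V, ∀ i, w i = 1 ∨ w i = -1) :
    LipschitzWith 1 (gpV q V) := by
  have hdR : (0:ℝ) < d := Nat.cast_pos.2 hd
  have hcpos : (0:ℝ) < (d:ℝ) ^ (1/q).toReal := Real.rpow_pos_of_pos hdR _
  have key : ∀ x y : PiLp p fun _ : Fin d => ℝ, gpV q V x ≤ gpV q V y + dist x y := by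
    intro x y
    refine gpV_le V x ?_ ?_
    · have h1 := half_le_gpV (q := q) V y
      have h2 : (0:ℝ) ≤ dist x y := dist_nonneg
      linarith
    · intro w hw
      have hsub : (∑ i : Fin d, w i * x i) - (∑ i : Fin d, w i * y i)
          = ∑ i : Fin d, w i * (x - y) i := by
        rw [← Finset.sum_sub_distrib]
        refine Finset.sum_congr rfl fun i _ => ?_
        rw [PiLp.sub_apply]
        ring
      have habs : (∑ i : Fin d, w i * (x - y) i) ≤ ∑ i : Fin d, |(x - y) i| := by
        refine Finset.sum_le_sum fun i _ => ?_
        rcases hV w hw i with h | h <;> rw [h]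
        · rw [one_mul]; exact le_abs_self _
        · rw [neg_one_mul]; exact neg_le_abs _
      have hH := sum_abs_le_rpow_mul_norm hd hpq (x - y)
      have hle : (∑ i : Fin d, w i * x i)
          ≤ (∑ i : Fin d, w i * y i) + (d:ℝ) ^ (1/q).toReal * dist x y := by
        rw [dist_eq_norm]
        linarith
      have hdiv : (∑ i : Fin d, w i * x i) / (d:ℝ) ^ (1/q).toReal
          ≤ ((∑ i : Fin d, w i * y i) + (d:ℝ) ^ (1/q).toReal * dist x y)
            / (d:ℝ) ^ (1/q).toReal := by gcongr
      have heq : ((∑ i : Fin d, w i * y i) + (d:ℝ) ^ (1/q).toReal * dist x y)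
            / (d:ℝ) ^ (1/q).toReal
          = (∑ i : Fin d, w i * y i) / (d:ℝ) ^ (1/q).toReal + dist x y := by
        field_simp
      have hmem := le_gpV_of_mem (q := q) hw y
      rw [heq] at hdiv
      linarith
  apply LipschitzWith.of_dist_le_mul
  intro x y
  rw [NNReal.coe_one, one_mul, Real.dist_eq, abs_sub_le_iff]
  have k1 := key x y
  have k2 := key y x
  rw [dist_comm y x] at k2
  constructor <;> linarith

end aux

lemma count_cover {α : Type*} [DecidableEq α] (n : ℕ) (W : Finset α) :
    ((Fintype.piFinset fun _ : Fin n => W.powerset).filter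
      (fun Vs => ∀ w ∈ W, ∃ i, w ∈ Vs i)).card = (2^n - 1)^W.card := by
  classical
  have hcard : (Fintype.piFinset fun _ : {x // x ∈ W} =>
      ((Finset.univ : Finset (Finset (Fin n))).erase ∅)).card = (2^n - 1)^W.card := by
    rw [Fintype.card_piFinset]
    have h1 : ((Finset.univ : Finset (Finset (Fin n))).erase ∅).card = 2^n - 1 := by
      rw [Finset.card_erase_of_mem (Finset.mem_univ _), Finset.card_univ,
        Fintype.card_finset, Fintype.card_fin]
    simp only [h1, Finset.prod_const, Finset.card_univ, Fintype.card_coe]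
  rw [← hcard]
  refine Finset.card_bij'
    (fun Vs _ => fun w : {x // x ∈ W} => Finset.univ.filter (fun k => (w : α) ∈ Vs k))
    (fun f _ => fun k => (W.attach.filter fun w => k ∈ f w).image Subtype.val)
    ?_ ?_ ?_ ?_
  · intro Vs hVs
    rw [Finset.mem_filter, Fintype.mem_piFinset] at hVs
    rw [Fintype.mem_piFinset]
    intro w
    rw [Finset.mem_erase]
    refine ⟨?_, Finset.mem_univ _⟩
    obtain ⟨i, hi⟩ := hVs.2 (w : α) w.2
    exact Finset.ne_empty_of_mem (Finset.mem_filter.2 ⟨Finset.mem_univ i, hi⟩)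
  · intro f hf
    rw [Fintype.mem_piFinset] at hf
    rw [Finset.mem_filter, Fintype.mem_piFinset]
    refine ⟨fun i => ?_, fun w hw => ?_⟩
    · rw [Finset.mem_powerset]
      intro x hx
      rw [Finset.mem_image] at hx
      obtain ⟨w, _, rfl⟩ := hx
      exact w.2
    · have hne : f ⟨w, hw⟩ ≠ ∅ := (Finset.mem_erase.1 (hf ⟨w, hw⟩)).1
      obtain ⟨k, hk⟩ := Finset.nonempty_iff_ne_empty.2 hne
      exact ⟨k, Finset.mem_image.2 ⟨⟨w, hw⟩,
        Finset.mem_filter.2 ⟨Finset.mem_attach _ _, hk⟩, rfl⟩⟩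
  · intro Vs hVs
    rw [Finset.mem_filter, Fintype.mem_piFinset] at hVs
    funext k
    ext x
    simp only [Finset.mem_image, Finset.mem_filter, Finset.mem_attach, true_and,
      Finset.mem_univ, Subtype.exists]
    constructor
    · rintro ⟨a, ha, hak, rfl⟩
      exact hak
    · intro hx
      exact ⟨x, Finset.mem_powerset.1 (hVs.1 k) hx, hx, rfl⟩
  · intro f hf
    funext w
    ext k
    simp only [Finset.mem_filter, Finset.mem_univ, true_and, Finset.mem_image,
      Finset.mem_attach, Subtype.exists]
    constructor
    · rintro ⟨a, ha, hk, rfl⟩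
      simpa using hk
    · intro hk
      exact ⟨(w : α), w.2, by simpa using hk, rfl⟩

lemma ratio_lt {n m : ℕ} (hm : 2^n ≤ m) (hm2 : 2 ≤ m) :
    2 * (((2:ℕ)^n - 1 : ℕ) : ℝ)^m < (((2:ℕ)^n : ℕ) : ℝ)^m := by
  rcases Nat.eq_zero_or_pos n with hn | hn
  · subst hn
    have hm0 : m ≠ 0 := by omega
    simp [zero_pow hm0]
  · have h2n : 2 ≤ 2^n := by
      calc 2 = 2^1 := (pow_one 2).symm
      _ ≤ 2^n := Nat.pow_le_pow_right (by norm_num) hn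
    set N : ℕ := 2^n with hN
    have hcast : ((N - 1 : ℕ) : ℝ) = (N : ℝ) - 1 := by
      have : 1 ≤ N := le_trans (by norm_num) h2n
      push_cast [this]
      ring
    rw [hcast]
    set t : ℝ := (N : ℝ) with ht
    have htge : (2:ℝ) ≤ t := by rw [ht]; exact_mod_cast h2n
    have ht1 : (0:ℝ) < t - 1 := by linarith
    have hnn : (0:ℝ) ≤ 1/(t-1) := by positivity
    have hbern : 1 + (N:ℝ) * (1/(t-1)) ≤ (1 + 1/(t-1))^N :=
      one_add_mul_le_pow (by linarith : (-2:ℝ) ≤ 1/(t-1)) N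
    have hgt2 : (2:ℝ) < (1 + 1/(t-1))^N := by
      have : (1:ℝ) < (N:ℝ) * (1/(t-1)) := by
        rw [mul_one_div, lt_div_iff₀ ht1, one_mul, ← ht]
        linarith
      linarith
    have hkey : 2 * (t-1)^N < t^N := by
      have heq : (1 + 1/(t-1)) = t / (t-1) := by field_simp; ring
      rw [heq, div_pow] at hgt2
      have h1 : (0:ℝ) < (t-1)^N := by positivity
      calc 2 * (t-1)^N < ((t^N)/((t-1)^N)) * (t-1)^N := by
            apply mul_lt_mul_of_pos_right hgt2 h1
      _ = t^N := by field_simp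
    have hmN : N ≤ m := hm
    have hsplit : m = N + (m - N) := by omega
    have h1 : (0:ℝ) < t - 1 := ht1
    have hle : (t-1)^(m-N) ≤ t^(m-N) := pow_le_pow_left₀ (by linarith) (by linarith) _
    have hp1 : (t-1)^m = (t-1)^N * (t-1)^(m-N) := by rw [← pow_add, ← hsplit]
    have hp2 : t^N * t^(m-N) = t^m := by rw [← pow_add, ← hsplit]
    calc 2 * (t-1)^m = (2 * (t-1)^N) * (t-1)^(m-N) := by rw [hp1]; ring
    _ < t^N * (t-1)^(m-N) := by
          apply mul_lt_mul_of_pos_right hkey (by positivity)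
    _ ≤ t^N * t^(m-N) := by
          apply mul_le_mul_of_nonneg_left hle (by positivity)
    _ = t^m := hp2

/-- Lower bound for ℓ_p/ℓ_q settings: Fix `p ∈ [1,∞]` with dual exponent `q`
(`1/p + 1/q = 1`). Let `K = B_p^d`, let `W ⊆ {-1,1}^d` with `|W| ≥ 2^(d/6)` and
`⟨u,v⟩ ≤ d/2` for distinct `u,v ∈ W`. Then each `g_{p,V}` is convex and `1`-Lipschitz on
`K` w.r.t. `ℓ_p`, and for every `n ≤ d/6`, with probability `> 1/2` over `n` i.i.d.
uniform subsets of `W`, there exists `xhat ∈ K` with `F_S(xhat) = min_K F_S` and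
`F_D(xhat) - min_K F_D ≥ 1/4`. -/
theorem erm_lower_bound_nonsmooth_lp {d n : ℕ} (hd : 0 < d)
    (p q : ℝ≥0∞) [Fact (1 ≤ p)] (hpq : 1/p + 1/q = 1)
    (W : Finset (PiLp p fun _ : Fin d => ℝ))
    (hW : ∀ w ∈ W, ∀ i : Fin d, w i = 1 ∨ w i = -1)
    (hcard : (2 : ℝ) ^ ((d : ℝ) / 6) ≤ (W.card : ℝ))
    (hsep : ∀ u ∈ W, ∀ v ∈ W, u ≠ v → (∑ i : Fin d, u i * v i) ≤ (d : ℝ) / 2)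
    (hn : (n : ℝ) ≤ (d : ℝ) / 6)
    (K : Set (PiLp p fun _ : Fin d => ℝ)) (hK : K = Metric.closedBall 0 1)
    (FD : (PiLp p fun _ : Fin d => ℝ) → ℝ)
    (hFD : FD = fun x => (∑ V ∈ W.powerset, gpV q V x) / (W.powerset.card : ℝ))
    (Fstar : ℝ) (hFstar : Fstar = sInf (FD '' K))
    (FS : (Fin n → Finset (PiLp p fun _ : Fin d => ℝ)) → (PiLp p fun _ : Fin d => ℝ) → ℝ)
    (hFS : FS = fun Vs x => (∑ i : Fin n, gpV q (Vs i) x) / (n : ℝ)) :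
    (∀ V ∈ W.powerset, ConvexOn ℝ K (gpV q V) ∧ LipschitzOnWith 1 (gpV q V) K) ∧
    (((Fintype.piFinset fun _ : Fin n => W.powerset).filter
        (fun Vs => ∃ xhat ∈ K, (∀ y ∈ K, FS Vs xhat ≤ FS Vs y) ∧
          FD xhat - Fstar ≥ 1/4)).card : ℝ) /
      ((Fintype.piFinset fun _ : Fin n => W.powerset).card : ℝ) > 1/2 := by
  classical
  have hp1 : (1:ℝ≥0∞) ≤ p := Fact.out
  obtain ⟨htab, hta, htb⟩ := dual_facts (p := p) (q := q) hpq
  have hdR : (0:ℝ) < d := Nat.cast_pos.2 hd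
  have hc : (0:ℝ) < (d:ℝ) ^ (1/q).toReal := Real.rpow_pos_of_pos hdR _
  have hKconv : Convex ℝ K := hK ▸ convex_closedBall 0 1
  constructor
  · intro V hV
    rw [Finset.mem_powerset] at hV
    exact ⟨gpV_convexOn hKconv V,
      (gpV_lipschitz hd hpq V (fun w hw => hW w (hV hw))).lipschitzOnWith⟩
  -- Part 2
  have hpow_pos : (0:ℝ) < (W.powerset.card : ℝ) := by
    rw [Finset.card_powerset]; positivity
  -- F_D ≥ 1/2 everywhere
  have hFDge : ∀ x, 1/2 ≤ FD x := by
    intro x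
    rw [hFD]
    simp only
    rw [le_div_iff₀ hpow_pos]
    calc (1/2 : ℝ) * (W.powerset.card:ℝ) = ∑ _V ∈ W.powerset, (1/2:ℝ) := by
          rw [Finset.sum_const, nsmul_eq_mul]; ring
    _ ≤ ∑ V ∈ W.powerset, gpV q V x := Finset.sum_le_sum fun V _ => half_le_gpV V x
  -- F_D 0 = 1/2
  have hgpV0 : ∀ V : Finset (PiLp p fun _ : Fin d => ℝ),
      gpV q V (0 : PiLp p fun _ : Fin d => ℝ) = 1/2 := by
    intro V
    refine le_antisymm (gpV_le V 0 le_rfl ?_) (half_le_gpV V 0)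
    intro w hw
    have h0 : (∑ i : Fin d, w i * (0 : PiLp p fun _ : Fin d => ℝ) i) = 0 := by
      refine Finset.sum_eq_zero fun i _ => ?_
      have : (0 : PiLp p fun _ : Fin d => ℝ) i = 0 := rfl
      rw [this, mul_zero]
    rw [h0, zero_div]
    norm_num
  have h0K : (0 : PiLp p fun _ : Fin d => ℝ) ∈ K := by
    rw [hK, Metric.mem_closedBall, dist_self]
    norm_num
  have hFD0 : FD 0 = 1/2 := by
    rw [hFD]
    simp only [hgpV0]
    rw [Finset.sum_const, nsmul_eq_mul]
    field_simp
  have hbdd : ∀ v ∈ FD '' K, (1/2:ℝ) ≤ v := by rintro v ⟨x, _, rfl⟩; exact hFDge x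
  have hmem : (1/2:ℝ) ∈ FD '' K := ⟨0, h0K, hFD0⟩
  have hFstar12 : Fstar = 1/2 := by
    rw [hFstar]
    exact le_antisymm (csInf_le ⟨1/2, hbdd⟩ hmem) (le_csInf ⟨_, hmem⟩ hbdd)
  set T := Fintype.piFinset fun _ : Fin n => W.powerset with hT
  -- main implication
  have main : ∀ Vs ∈ T, (∃ w ∈ W, ∀ i, w ∉ Vs i) →
      (∃ xhat ∈ K, (∀ y ∈ K, FS Vs xhat ≤ FS Vs y) ∧ FD xhat - Fstar ≥ 1/4) := by
    rintro Vs hVs ⟨ws, hwW, hwV⟩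
    set xh : PiLp p fun _ : Fin d => ℝ := ((d:ℝ) ^ (-(1/p).toReal)) • ws with hxh
    have hxhK : xh ∈ K := by
      rw [hK, Metric.mem_closedBall, dist_zero_right, norm_scaled_sign hd ws (hW ws hwW)]
    have hinner : ∀ w : PiLp p fun _ : Fin d => ℝ,
        (∑ i : Fin d, w i * xh i) = (d:ℝ)^(-(1/p).toReal) * ∑ i : Fin d, w i * ws i := by
      intro w
      rw [Finset.mul_sum]
      refine Finset.sum_congr rfl fun i _ => ?_
      rw [hxh, PiLp.smul_apply, smul_eq_mul]
      ring
    have hdd : (d:ℝ)^(-(1/p).toReal) * (d:ℝ) = (d:ℝ)^(1/q).toReal := by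
      have h2 : -(1/p).toReal + 1 = (1/q).toReal := by linarith
      calc (d:ℝ)^(-(1/p).toReal) * (d:ℝ) = (d:ℝ)^(-(1/p).toReal) * (d:ℝ)^(1:ℝ) := by
            rw [Real.rpow_one]
      _ = (d:ℝ)^(-(1/p).toReal + 1) := (Real.rpow_add hdR _ _).symm
      _ = (d:ℝ)^(1/q).toReal := by rw [h2]
    have hself : (∑ i : Fin d, ws i * ws i) = (d:ℝ) := by
      have h1 : ∀ i : Fin d, ws i * ws i = 1 := fun i => by
        rcases hW ws hwW i with h | h <;> rw [h] <;> norm_num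
      simp only [h1, Finset.sum_const, Finset.card_univ, Fintype.card_fin, nsmul_eq_mul,
        mul_one]
    have hxs : (∑ i : Fin d, ws i * xh i) / (d:ℝ)^(1/q).toReal = 1 := by
      rw [hinner, hself, hdd, div_self (ne_of_gt hc)]
    have hother : ∀ w ∈ W, w ≠ ws →
        (∑ i : Fin d, w i * xh i) / (d:ℝ)^(1/q).toReal ≤ 1/2 := by
      intro w hw hne
      rw [hinner, div_le_iff₀ hc]
      have hS := hsep w hw ws hwW hne
      have hpos : (0:ℝ) < (d:ℝ)^(-(1/p).toReal) := Real.rpow_pos_of_pos hdR _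
      have hmul : (d:ℝ)^(-(1/p).toReal) * (∑ i : Fin d, w i * ws i)
          ≤ (d:ℝ)^(-(1/p).toReal) * ((d:ℝ)/2) := mul_le_mul_of_nonneg_left hS hpos.le
      have heq : (d:ℝ)^(-(1/p).toReal) * ((d:ℝ)/2) = 1/2 * (d:ℝ)^(1/q).toReal := by
        rw [← hdd]; ring
      linarith
    have hgS : ∀ i : Fin n, gpV q (Vs i) xh = 1/2 := by
      intro i
      have hVsub : Vs i ⊆ W := Finset.mem_powerset.1 ((Fintype.mem_piFinset.1 hVs) i)
      refine le_antisymm (gpV_le _ _ le_rfl ?_) (half_le_gpV _ _)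
      intro w hw
      exact hother w (hVsub hw) (fun h => hwV i (h ▸ hw))
    have hFSmin : ∀ y, FS Vs xh ≤ FS Vs y := by
      intro y
      rw [hFS]
      simp only
      have h1 : (∑ i : Fin n, gpV q (Vs i) xh) ≤ ∑ i : Fin n, gpV q (Vs i) y := by
        refine Finset.sum_le_sum fun i _ => ?_
        rw [hgS i]
        exact half_le_gpV _ _
      have hn0 : (0:ℝ) ≤ ((n:ℝ))⁻¹ := by positivity
      rw [div_eq_mul_inv, div_eq_mul_inv]
      exact mul_le_mul_of_nonneg_right h1 hn0
    -- F_D xh ≥ 3/4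
    have hWsplit : W = insert ws (W.erase ws) := (Finset.insert_erase hwW).symm
    have hsum : ∑ V ∈ W.powerset, gpV q V xh
        = ∑ t ∈ (W.erase ws).powerset, gpV q t xh
          + ∑ t ∈ (W.erase ws).powerset, gpV q (insert ws t) xh := by
      conv_lhs => rw [hWsplit]
      exact Finset.sum_powerset_insert (Finset.notMem_erase ws W) _
    have hcards : W.powerset.card = 2 * (W.erase ws).powerset.card := by
      rw [Finset.card_powerset, Finset.card_powerset, Finset.card_erase_of_mem hwW]
      have hW1 : 1 ≤ W.card := Finset.card_pos.2 ⟨ws, hwW⟩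
      have h1 : W.card - 1 + 1 = W.card := by omega
      have h2 := pow_succ 2 (W.card - 1)
      rw [h1] at h2
      omega
    have h34 : 3/4 ≤ FD xh := by
      rw [hFD]
      simp only
      rw [le_div_iff₀ hpow_pos, hsum]
      have hA : ((W.erase ws).powerset.card : ℝ) * (1/2:ℝ)
          ≤ ∑ t ∈ (W.erase ws).powerset, gpV q t xh := by
        calc ((W.erase ws).powerset.card : ℝ) * (1/2:ℝ)
            = ∑ _t ∈ (W.erase ws).powerset, (1/2:ℝ) := by
              rw [Finset.sum_const, nsmul_eq_mul]
        _ ≤ _ := Finset.sum_le_sum fun t _ => half_le_gpV t xh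
      have hB : ((W.erase ws).powerset.card : ℝ)
          ≤ ∑ t ∈ (W.erase ws).powerset, gpV q (insert ws t) xh := by
        calc ((W.erase ws).powerset.card : ℝ)
            = ∑ _t ∈ (W.erase ws).powerset, (1:ℝ) := by
              rw [Finset.sum_const, nsmul_eq_mul, mul_one]
        _ ≤ _ := by
              refine Finset.sum_le_sum fun t _ => ?_
              have h := le_gpV_of_mem (q := q) (Finset.mem_insert_self ws t) xh
              rw [hxs] at h
              exact h
      have hc2 : (W.powerset.card : ℝ) = 2 * ((W.erase ws).powerset.card : ℝ) := by
        rw [hcards]; push_cast; ring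
      rw [hc2]
      linarith
    exact ⟨xh, hxhK, fun y _ => hFSmin y, by rw [hFstar12]; linarith⟩
  -- counting
  set m := W.card with hm
  have hm2 : 2 ≤ m := by
    have h1 : (1:ℝ) < (2:ℝ) ^ ((d:ℝ)/6) := by
      refine Real.one_lt_rpow_iff_of_pos (by norm_num) |>.2 (Or.inl ⟨by norm_num, by positivity⟩)
    have : (1:ℝ) < (m:ℝ) := lt_of_lt_of_le h1 hcard
    exact_mod_cast Nat.succ_le_of_lt (by exact_mod_cast this)
  have hmN : 2^n ≤ m := by
    have h1 : ((2:ℝ))^(n:ℝ) ≤ (2:ℝ) ^ ((d:ℝ)/6) :=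
      Real.rpow_le_rpow_of_exponent_le (by norm_num) hn
    have h2 : ((2:ℝ))^(n:ℝ) ≤ (m:ℝ) := le_trans h1 hcard
    rw [Real.rpow_natCast] at h2
    exact_mod_cast h2
  have hble : (2^n - 1)^m ≤ T.card := by
    rw [hm, ← count_cover n W]
    exact Finset.card_le_card (Finset.filter_subset _ _)
  have hTcard : T.card = (2^n)^m := by
    rw [hT, Fintype.card_piFinset]
    simp only [Finset.prod_const, Finset.card_univ, Fintype.card_fin, Finset.card_powerset]
    rw [← pow_mul, ← pow_mul, Nat.mul_comm]
  have hcompl : T.card - (2^n - 1)^m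
      ≤ (T.filter (fun Vs => ∃ w ∈ W, ∀ i, w ∉ Vs i)).card := by
    have hQ : T.filter (fun Vs => ∃ w ∈ W, ∀ i, w ∉ Vs i)
        = T.filter (fun Vs => ¬ ∀ w ∈ W, ∃ i, w ∈ Vs i) := by
      refine Finset.filter_congr fun Vs _ => ?_
      constructor
      · rintro ⟨w, hw, h⟩ 
        intro hall
        obtain ⟨i, hi⟩ := hall w hw
        exact h i hi
      · intro h
        by_contra hcon
        push_neg at hcon
        exact h fun w hw => hcon w hw
    rw [hQ]
    have hadd := Finset.card_filter_add_card_filter_not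
      (s := T) (p := fun Vs => ∀ w ∈ W, ∃ i, w ∈ Vs i)
    have hcov : (T.filter (fun Vs => ∀ w ∈ W, ∃ i, w ∈ Vs i)).card = (2^n - 1)^m := by
      rw [hm]
      exact count_cover n W
    rw [hcov] at hadd
    rw [tsub_le_iff_right]
    exact le_of_eq (hadd.symm.trans (Nat.add_comm _ _))
  have hmain_card : (T.filter (fun Vs => ∃ w ∈ W, ∀ i, w ∉ Vs i)).card
      ≤ (T.filter (fun Vs => ∃ xhat ∈ K, (∀ y ∈ K, FS Vs xhat ≤ FS Vs y) ∧
          FD xhat - Fstar ≥ 1/4)).card := by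
    apply Finset.card_le_card
    intro Vs hVs
    rw [Finset.mem_filter] at *
    exact ⟨hVs.1, main Vs hVs.1 hVs.2⟩
  -- final arithmetic
  have hratio := ratio_lt hmN hm2
  have hTpos : (0:ℝ) < (T.card : ℝ) := by
    rw [hTcard]
    positivity
  rw [gt_iff_lt, lt_div_iff₀ hTpos]
  have hcast1 : ((T.card - (2^n - 1)^m : ℕ) : ℝ) = (T.card : ℝ) - (((2^n - 1)^m : ℕ) : ℝ) := by
    exact Nat.cast_sub hble
  have hge : (T.card : ℝ) - (((2^n - 1)^m : ℕ) : ℝ)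
      ≤ ((T.filter (fun Vs => ∃ xhat ∈ K, (∀ y ∈ K, FS Vs xhat ≤ FS Vs y) ∧
          FD xhat - Fstar ≥ 1/4)).card : ℝ) := by
    rw [← hcast1]
    exact_mod_cast le_trans hcompl hmain_card
  have hTR : (T.card : ℝ) = (((2:ℕ)^n : ℕ) : ℝ)^m := by
    rw [hTcard]; push_cast; ring
  have hbadR : (((2^n - 1)^m : ℕ) : ℝ) = (((2:ℕ)^n - 1 : ℕ) : ℝ)^m := by push_cast; ring
  have h2bad : 2 * (((2^n - 1)^m : ℕ) : ℝ) < (T.card : ℝ) := by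
    rw [hbadR, hTR]
    exact hratio
  linarith
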